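/- Let α > 0, ρ > 0, η, κ, β ∈ ℝ, q > 1, and 0 ≤ a < x. Let f, g be two positive functions on [a,x] such that I g^q(x) < ∞ and I (f+g)^q(x) < ∞, where I denotes the generalized fractional integral ρI^{α,β}_{a+,η,κ}. If there exists a real constant m > 0 such that m ≤ f(t)/g(t) for all t ∈ [a,x], then I g^q(x) ≤ (1/(m+1)^q) · I (f+g)^q(x). -/
import Mathlib


open MeasureTheory

/-- The left-sided generalized (Katugampola) fractional integral
`ρI^{α,β}_{a+,η,κ} f (x)`. -/
noncomputable def katI (α ρ η κ β a x : ℝ) (f : ℝ → ℝ) : ℝ :=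
  (ρ ^ (1 - β) * x ^ κ / Real.Gamma α) *
    ∫ t in a..x, t ^ (ρ * (η + 1) - 1) * (x ^ ρ - t ^ ρ) ^ (α - 1) * f t

/-- Finiteness of the generalized fractional integral, expressed as integrability of the
kernel-weighted integrand. -/
def katIntegrable (α ρ η κ β a x : ℝ) (f : ℝ → ℝ) : Prop :=
  IntervalIntegrable
    (fun t => t ^ (ρ * (η + 1) - 1) * (x ^ ρ - t ^ ρ) ^ (α - 1) * f t)
    volume a x

/-- Bound for `I g^q` via the generalized fractional integral. -/
theorem gq_bound_katugampola
    (α ρ η κ β q m a x : ℝ) (hα : 0 < α) (hρ : 0 < ρ) (hq : 1 < q)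
    (ha : 0 ≤ a) (hax : a < x)
    (f g : ℝ → ℝ)
    (hf_pos : ∀ t ∈ Set.Icc a x, 0 < f t)
    (hg_pos : ∀ t ∈ Set.Icc a x, 0 < g t)
    (hg_int : katIntegrable α ρ η κ β a x (fun t => g t ^ q))
    (hsum_int : katIntegrable α ρ η κ β a x (fun t => (f t + g t) ^ q))
    (hm : 0 < m)
    (hbound : ∀ t ∈ Set.Icc a x, m ≤ f t / g t) :
    katI α ρ η κ β a x (fun t => g t ^ q) ≤
      (1 / (m + 1) ^ q) * katI α ρ η κ β a x (fun t => (f t + g t) ^ q) := by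
  have hx : 0 < x := lt_of_le_of_lt ha hax
  set c : ℝ := 1 / (m + 1) ^ q with hc
  have hcpos : 0 < c := by
    apply div_pos one_pos
    exact Real.rpow_pos_of_pos (by linarith) q
  set K : ℝ → ℝ := fun t => t ^ (ρ * (η + 1) - 1) * (x ^ ρ - t ^ ρ) ^ (α - 1) with hK
  have hKnn : ∀ t ∈ Set.Icc a x, 0 ≤ K t := by
    intro t ht
    have ht0 : 0 ≤ t := le_trans ha ht.1
    have h1 : (0:ℝ) ≤ t ^ (ρ * (η + 1) - 1) := Real.rpow_nonneg ht0 _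
    have h2 : t ^ ρ ≤ x ^ ρ := Real.rpow_le_rpow ht0 ht.2 hρ.le
    exact mul_nonneg h1 (Real.rpow_nonneg (by linarith) _)
  -- pointwise bound
  have hpt : ∀ t ∈ Set.Icc a x, g t ^ q ≤ c * (f t + g t) ^ q := by
    intro t ht
    have hg := hg_pos t ht
    have hf := hf_pos t ht
    have hmg : m * g t ≤ f t := (le_div_iff₀ hg).mp (hbound t ht)
    have hmul : (m + 1) * g t ≤ f t + g t := by ring_nf; nlinarith
    have h1 : ((m + 1) * g t) ^ q ≤ (f t + g t) ^ q :=
      Real.rpow_le_rpow (by positivity) hmul (by linarith)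
    rw [Real.mul_rpow (by linarith) hg.le] at h1
    rw [hc, div_mul_eq_mul_div, one_mul, le_div_iff₀ (Real.rpow_pos_of_pos (by linarith) q)]
    linarith [h1]
  -- integral inequality
  have hint2 : IntervalIntegrable (fun t => K t * (c * (f t + g t) ^ q)) volume a x := by
    have heq : (fun t => K t * (c * (f t + g t) ^ q))
        = fun t => c * (K t * (f t + g t) ^ q) := by ext t; ring
    rw [heq]
    exact hsum_int.const_mul c
  have hle : (∫ t in a..x, K t * g t ^ q) ≤ ∫ t in a..x, K t * (c * (f t + g t) ^ q) := by
    apply intervalIntegral.integral_mono_on hax.le hg_int hint2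
    intro t ht
    exact mul_le_mul_of_nonneg_left (hpt t ht) (hKnn t ht)
  have heq : (∫ t in a..x, K t * (c * (f t + g t) ^ q))
      = c * ∫ t in a..x, K t * (f t + g t) ^ q := by
    rw [← intervalIntegral.integral_const_mul]
    congr 1; ext t; ring
  rw [heq] at hle
  have hCpos : 0 ≤ ρ ^ (1 - β) * x ^ κ / Real.Gamma α := by
    apply div_nonneg
    · exact mul_nonneg (Real.rpow_nonneg hρ.le _) (Real.rpow_nonneg hx.le _)
    · exact (Real.Gamma_pos_of_pos hα).le
  unfold katI
  calc (ρ ^ (1 - β) * x ^ κ / Real.Gamma α) * ∫ t in a..x, K t * g t ^ q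
      ≤ (ρ ^ (1 - β) * x ^ κ / Real.Gamma α) * (c * ∫ t in a..x, K t * (f t + g t) ^ q) :=
        mul_le_mul_of_nonneg_left hle hCpos
    _ = c * ((ρ ^ (1 - β) * x ^ κ / Real.Gamma α) * ∫ t in a..x, K t * (f t + g t) ^ q) := by
        ring
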